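/- For a BSC with crossover probability p ∈ [0,1], the symmetric capacity I and the Bhattacharyya parameter Z = 2√(p(1−p)) satisfy I + Z ≥ 1. -/

import Mathlib

/-!
Measured in nats, the claim is that `g(p) = 2 log 2 · √(p(1-p)) − H(p)` is nonnegative on `[0, 1]`.
It vanishes at `0`, `1/2` and `1`, and, since `4p(1-p) + (1-2p)² = 1`, its second derivative is
`(2√(p(1-p)) − log 2) / (2 (p(1-p))^{3/2})`. Hence `g` is convex on the middle interval
`[p₀, 1 − p₀]`, where `1/2` is a critical point and therefore the minimum, `0`; and `g` is concave
on `[0, p₀]` and `[1 − p₀, 1]`, so there it lies above the smaller of its nonnegative endpoint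
values.
-/

/-- The binary entropy function (in bits). -/
noncomputable def binEnt (p : ℝ) : ℝ :=
  -p * Real.logb 2 p - (1 - p) * Real.logb 2 (1 - p)

open Real Set

lemma binEnt_eq_binEntropy_div_log_two (p : ℝ) : binEnt p = binEntropy p / log 2 := by
  simp only [binEnt, binEntropy, logb, log_inv]
  ring

noncomputable def arikanGap (p : ℝ) : ℝ := 2 * log 2 * √(p * (1 - p)) - binEntropy p

noncomputable def arikanGapDeriv (p : ℝ) : ℝ :=
  log 2 * (1 - 2 * p) / √(p * (1 - p)) - (log (1 - p) - log p)

/-- The root `p₀ < 1/2` of `2 √(p (1 - p)) = log 2`, where the second derivative of `arikanGap`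
changes sign. -/
noncomputable def arikanGapInflection : ℝ := (1 - √(1 - log 2 ^ 2)) / 2

lemma continuous_arikanGap : Continuous arikanGap := by
  unfold arikanGap; fun_prop

lemma hasDerivAt_sqrt_mul_one_sub {p : ℝ} (h₀ : 0 < p) (h₁ : p < 1) :
    HasDerivAt (fun p ↦ √(p * (1 - p))) ((1 - 2 * p) / (2 * √(p * (1 - p)))) p := by
  have hpoly : HasDerivAt (fun p : ℝ ↦ p * (1 - p)) (1 - 2 * p) p := by
    refine ((hasDerivAt_id' p).mul ((hasDerivAt_id' p).const_sub 1)).congr_deriv ?_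
    ring
  exact hpoly.sqrt (by nlinarith)

lemma hasDerivAt_arikanGap {p : ℝ} (h₀ : 0 < p) (h₁ : p < 1) :
    HasDerivAt arikanGap (arikanGapDeriv p) p := by
  refine (((hasDerivAt_sqrt_mul_one_sub h₀ h₁).const_mul (2 * log 2)).sub
    (hasDerivAt_binEntropy h₀.ne' (by linarith))).congr_deriv ?_
  unfold arikanGapDeriv
  field_simp

lemma hasDerivAt_arikanGapDeriv {p : ℝ} (h₀ : 0 < p) (h₁ : p < 1) :
    HasDerivAt arikanGapDeriv ((2 * √(p * (1 - p)) - log 2) / (2 * √(p * (1 - p)) ^ 3)) p := by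
  have hpq : 0 < p * (1 - p) := by nlinarith
  have hs : 0 < √(p * (1 - p)) := sqrt_pos.2 hpq
  have hsq : √(p * (1 - p)) ^ 2 = p * (1 - p) := sq_sqrt hpq.le
  have hlin : HasDerivAt (fun p : ℝ ↦ log 2 * (1 - 2 * p)) (log 2 * -(2 * 1)) p :=
    (((hasDerivAt_id' p).const_mul 2).const_sub 1).const_mul (log 2)
  have hlog : HasDerivAt (fun p : ℝ ↦ log (1 - p)) (-1 / (1 - p)) p :=
    ((hasDerivAt_id' p).const_sub 1).log (by linarith)
  refine ((hlin.div (hasDerivAt_sqrt_mul_one_sub h₀ h₁) hs.ne').sub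
    (hlog.sub (hasDerivAt_log h₀.ne'))).congr_deriv ?_
  have : 1 - p ≠ 0 := by linarith
  field_simp
  linear_combination (2 * √(p * (1 - p)) - 4 * log 2 * (p * (1 - p))) * hsq

lemma log_two_sq_lt_one : log 2 ^ 2 < 1 := by
  nlinarith [log_pos one_lt_two, log_two_lt_d9]

lemma arikanGapInflection_pos : 0 < arikanGapInflection := by
  have : √(1 - log 2 ^ 2) < 1 := (sqrt_lt' one_pos).2 (by nlinarith [log_pos one_lt_two])
  unfold arikanGapInflection; linarith

lemma arikanGapInflection_lt_half : arikanGapInflection < 2⁻¹ := by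
  have : 0 < √(1 - log 2 ^ 2) := sqrt_pos.2 (by linarith [log_two_sq_lt_one])
  unfold arikanGapInflection; linarith

lemma log_two_le_two_sqrt_mul_one_sub_iff (p : ℝ) :
    log 2 ≤ 2 * √(p * (1 - p)) ↔ p ∈ Icc arikanGapInflection (1 - arikanGapInflection) := by
  have hsqrt : 2 * √(p * (1 - p)) = √(1 - (1 - 2 * p) ^ 2) := by
    rw [show 1 - (1 - 2 * p) ^ 2 = 2 ^ 2 * (p * (1 - p)) by ring,
      sqrt_mul (by norm_num) (p * (1 - p)), sqrt_sq zero_le_two]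
  rw [hsqrt, le_sqrt' (log_pos one_lt_two),
    show log 2 ^ 2 ≤ 1 - (1 - 2 * p) ^ 2 ↔ (1 - 2 * p) ^ 2 ≤ 1 - log 2 ^ 2 by
      constructor <;> intro <;> linarith,
    Real.sq_le (by linarith [log_two_sq_lt_one])]
  unfold arikanGapInflection
  constructor
  · rintro ⟨h₁, h₂⟩; constructor <;> linarith
  · rintro ⟨h₁, h₂⟩; constructor <;> linarith

lemma convexOn_arikanGap :
    ConvexOn ℝ (Icc arikanGapInflection (1 - arikanGapInflection)) arikanGap := by
  have hmem : ∀ p ∈ interior (Icc arikanGapInflection (1 - arikanGapInflection)),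
      0 < p ∧ p < 1 := by
    intro p hp
    rw [interior_Icc] at hp
    have := arikanGapInflection_pos
    exact ⟨by linarith [hp.1], by linarith [hp.2]⟩
  refine convexOn_of_hasDerivWithinAt2_nonneg (convex_Icc _ _) continuous_arikanGap.continuousOn
    (fun p hp ↦ (hasDerivAt_arikanGap (hmem p hp).1 (hmem p hp).2).hasDerivWithinAt)
    (fun p hp ↦ (hasDerivAt_arikanGapDeriv (hmem p hp).1 (hmem p hp).2).hasDerivWithinAt)
    (fun p hp ↦ div_nonneg ?_ (by positivity))
  rw [sub_nonneg, log_two_le_two_sqrt_mul_one_sub_iff]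
  exact interior_subset hp

lemma concaveOn_arikanGap {a b : ℝ} (ha : 0 ≤ a) (hb : b ≤ 1)
    (hab : ∀ p ∈ Ioo a b, p ∉ Icc arikanGapInflection (1 - arikanGapInflection)) :
    ConcaveOn ℝ (Icc a b) arikanGap := by
  have hmem : ∀ p ∈ interior (Icc a b), 0 < p ∧ p < 1 := by
    intro p hp
    rw [interior_Icc] at hp
    exact ⟨by linarith [hp.1], by linarith [hp.2]⟩
  refine concaveOn_of_hasDerivWithinAt2_nonpos (convex_Icc _ _) continuous_arikanGap.continuousOn
    (fun p hp ↦ (hasDerivAt_arikanGap (hmem p hp).1 (hmem p hp).2).hasDerivWithinAt)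
    (fun p hp ↦ (hasDerivAt_arikanGapDeriv (hmem p hp).1 (hmem p hp).2).hasDerivWithinAt)
    (fun p hp ↦ div_nonpos_of_nonpos_of_nonneg ?_ (by positivity))
  rw [interior_Icc] at hp
  have := mt (log_two_le_two_sqrt_mul_one_sub_iff p).1 (hab p hp)
  linarith

lemma arikanGap_two_inv : arikanGap 2⁻¹ = 0 := by
  rw [arikanGap, show (2⁻¹ * (1 - 2⁻¹) : ℝ) = 2⁻¹ ^ 2 by norm_num, sqrt_sq (by norm_num),
    binEntropy_two_inv]
  ring

lemma isMinOn_arikanGap_two_inv :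
    IsMinOn arikanGap (Icc arikanGapInflection (1 - arikanGapInflection)) 2⁻¹ := by
  have := arikanGapInflection_lt_half
  refine convexOn_arikanGap.isMinOn_of_rightDeriv_eq_zero ?_ ?_
  · rw [interior_Icc]
    constructor <;> linarith
  · rw [((hasDerivAt_arikanGap (by norm_num) (by norm_num)).hasDerivWithinAt).derivWithin
      (uniqueDiffWithinAt_Ioi _)]
    norm_num [arikanGapDeriv]

lemma arikanGap_nonneg {p : ℝ} (hp : p ∈ Icc 0 1) : 0 ≤ arikanGap p := by
  set p₀ := arikanGapInflection
  have hp₀ : 0 < p₀ := arikanGapInflection_pos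
  have hp₀' : p₀ < 2⁻¹ := arikanGapInflection_lt_half
  have hmid : ∀ q ∈ Icc p₀ (1 - p₀), 0 ≤ arikanGap q :=
    fun q hq ↦ arikanGap_two_inv ▸ isMinOn_arikanGap_two_inv hq
  have hleft : ConcaveOn ℝ (Icc 0 p₀) arikanGap :=
    concaveOn_arikanGap le_rfl (by linarith) fun q hq hq' ↦ hq.2.not_ge hq'.1
  have hright : ConcaveOn ℝ (Icc (1 - p₀) 1) arikanGap :=
    concaveOn_arikanGap (by linarith) le_rfl fun q hq hq' ↦ hq.1.not_ge hq'.2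
  have hzero : arikanGap 0 = 0 := by simp [arikanGap]
  have hone : arikanGap 1 = 0 := by simp [arikanGap]
  rcases le_or_gt p p₀ with h | h
  · have := hleft.min_le_of_mem_Icc ⟨le_rfl, hp₀.le⟩ ⟨hp₀.le, le_rfl⟩ ⟨hp.1, h⟩
    rw [hzero] at this
    exact (le_min le_rfl (hmid p₀ ⟨le_rfl, by linarith⟩)).trans this
  rcases le_or_gt p (1 - p₀) with h' | h'
  · exact hmid p ⟨h.le, h'⟩
  · have := hright.min_le_of_mem_Icc ⟨le_rfl, by linarith⟩ ⟨by linarith, le_rfl⟩ ⟨h'.le, hp.2⟩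
    rw [hone] at this
    exact (le_min (hmid _ ⟨by linarith, le_rfl⟩) le_rfl).trans this

/-- Arikan's inequality `I + Z ≥ 1` for a BSC: with symmetric capacity
`I = 1 − h₂(p)` and Bhattacharyya parameter `Z = 2√(p(1−p))`. -/
theorem bsc_I_add_Z_ge_one (p : ℝ) (hp : p ∈ Set.Icc (0:ℝ) 1) :
    (1 - binEnt p) + 2 * Real.sqrt (p * (1 - p)) ≥ 1 := by
  have hgap : 0 ≤ 2 * log 2 * √(p * (1 - p)) - binEntropy p := arikanGap_nonneg hp
  have : binEnt p ≤ 2 * √(p * (1 - p)) := by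
    rw [binEnt_eq_binEntropy_div_log_two, div_le_iff₀ (log_pos one_lt_two)]
    linarith
  linarith
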